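/- arXiv:1904.12112 — 5 statements merged into one kernel-verified Lean document; each statement's English description precedes it below -/
import Mathlib

section
/- There is no way to pack a 1×2 block and a 2×1 block into a 2×2 container such that each block is axis-aligned with its coordinates divisible by its width and height respectively, the blocks do not overlap, and both blocks lie inside the container. In particular, the Kraft inequality being satisfied (the total area of the blocks equals the container's area, 4 = 4) does not imply packability. -/
/-- A `1×2` block and a `2×1` block, placed aligned (coordinates divisible
by the respective width and height), cannot be packed without overlap into the
container `[0,2) × [0,2)`, even though the total area of the blocks equals the
container's area (the Kraft inequality is satisfied). -/
theorem stmt2 :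
    ¬ ∃ (x1 y1 x2 y2 : ℤ),
      (1 : ℤ) ∣ x1 ∧ (2 : ℤ) ∣ y1 ∧            -- the 1×2 block is aligned
      (2 : ℤ) ∣ x2 ∧ (1 : ℤ) ∣ y2 ∧            -- the 2×1 block is aligned
      (Set.Ico x1 (x1 + 1) ×ˢ Set.Ico y1 (y1 + 2)) ∩
        (Set.Ico x2 (x2 + 2) ×ˢ Set.Ico y2 (y2 + 1)) = ∅ ∧
      (Set.Ico x1 (x1 + 1) ×ˢ Set.Ico y1 (y1 + 2) ⊆
        Set.Ico (0 : ℤ) 2 ×ˢ Set.Ico (0 : ℤ) 2) ∧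
      (Set.Ico x2 (x2 + 2) ×ˢ Set.Ico y2 (y2 + 1) ⊆
        Set.Ico (0 : ℤ) 2 ×ˢ Set.Ico (0 : ℤ) 2) := by
  rintro ⟨x1, y1, x2, y2, -, hy1, hx2, -, hdisj, hc1, hc2⟩
  have h1 : ((x1, y1) : ℤ × ℤ) ∈ Set.Ico x1 (x1 + 1) ×ˢ Set.Ico y1 (y1 + 2) := by
    simp [Set.mem_prod]
  have h2 : ((x2, y2) : ℤ × ℤ) ∈ Set.Ico x2 (x2 + 2) ×ˢ Set.Ico y2 (y2 + 1) := by
    simp [Set.mem_prod]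
  have b1 := hc1 h1
  have b2 := hc2 h2
  simp [Set.mem_prod] at b1 b2
  have hy1' : y1 = 0 := by omega
  have hx2' : x2 = 0 := by omega
  have : ((x1, y2) : ℤ × ℤ) ∈ (Set.Ico x1 (x1 + 1) ×ˢ Set.Ico y1 (y1 + 2)) ∩
      (Set.Ico x2 (x2 + 2) ×ˢ Set.Ico y2 (y2 + 1)) := by
    simp [Set.mem_prod]; omega
  rw [hdisj] at this
  exact this
end

section
/- For any uniquely decodable n-channel source code with m codewords, alphabet sizes q1, ..., qn ≥ 2, and codeword lengths ℓᵢʲ (length of the j-th codeword in channel i), the generalized Kraft inequality holds: ∑_{j=1}^{m} ∏_{i=1}^{n} qᵢ^{-ℓᵢʲ} ≤ 1. -/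
/-- The channel-wise concatenation of the codewords of a sequence of source symbols. -/
def encodeSeq {m n : ℕ} {q : Fin n → ℕ}
    (c : Fin m → ∀ i : Fin n, List (Fin (q i))) (L : List (Fin m)) :
    ∀ i : Fin n, List (Fin (q i)) :=
  fun i => (L.map fun j => c j i).flatten

private lemma zpow_neg_natCast (x : ℝ) (k : ℕ) : x ^ (-(k : ℤ)) = x⁻¹ ^ k := by
  rw [zpow_neg, zpow_natCast, inv_pow]

/-- Key counting bound: `S^N ≤ (N*B+1)^n`. -/
private lemma key_bound (m n : ℕ) (q : Fin n → ℕ) (hq : ∀ i, 2 ≤ q i)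
    (c : Fin m → ∀ i : Fin n, List (Fin (q i)))
    (hud : Function.Injective (encodeSeq c)) (B : ℕ)
    (hB : ∀ j i, (c j i).length ≤ B) (N : ℕ) :
    (∑ j : Fin m, ∏ i : Fin n, ((q i : ℝ)) ^ (-(((c j i).length : ℕ) : ℤ))) ^ N
      ≤ ((N * B + 1 : ℕ) : ℝ) ^ n := by
  have hq0 : ∀ i, (0 : ℝ) < (q i : ℝ) := fun i => by
    have := hq i; exact_mod_cast lt_of_lt_of_le two_pos this
  -- abbreviations
  set b : Fin n → ℕ → ℝ := fun i k => ((q i : ℝ)⁻¹) ^ k with hb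
  have hstep1 : (∑ j : Fin m, ∏ i : Fin n, ((q i : ℝ)) ^ (-(((c j i).length : ℕ) : ℤ)))
      = ∑ j : Fin m, ∏ i : Fin n, b i (c j i).length := by
    refine Finset.sum_congr rfl fun j _ => Finset.prod_congr rfl fun i _ => ?_
    simp [hb, zpow_neg_natCast]
  rw [hstep1]
  -- total channel length function
  set K : (Fin N → Fin m) → (Fin n → ℕ) :=
    fun L i => ∑ t : Fin N, (c (L t) i).length with hK
  -- expand the power as a sum over all sequences
  have hpow : (∑ j : Fin m, ∏ i : Fin n, b i (c j i).length) ^ N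
      = ∑ L : Fin N → Fin m, ∏ i : Fin n, b i (K L i) := by
    have h1 : (∑ j : Fin m, ∏ i : Fin n, b i (c j i).length) ^ N
        = ∏ _t : Fin N, (∑ j : Fin m, ∏ i : Fin n, b i (c j i).length) := by
      simp [Finset.prod_const]
    rw [h1, Finset.prod_univ_sum (fun _ => (Finset.univ : Finset (Fin m)))
      (fun _ j => ∏ i : Fin n, b i (c j i).length)]
    rw [Fintype.piFinset_univ]
    refine Finset.sum_congr rfl fun L _ => ?_
    rw [Finset.prod_comm]
    refine Finset.prod_congr rfl fun i _ => ?_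
    simp [hb, Finset.prod_pow_eq_pow_sum, hK]
  rw [hpow]
  -- group the sum by the value of K
  rw [Finset.sum_comp (fun k : Fin n → ℕ => ∏ i : Fin n, b i (k i)) K]
  -- the length of the encoded sequence in channel i is K L i
  have hlen : ∀ (L : Fin N → Fin m) (i : Fin n),
      (encodeSeq c (List.ofFn L) i).length = K L i := by
    intro L i
    simp only [encodeSeq, List.length_flatten, List.map_map, List.map_ofFn, List.sum_ofFn]
    rfl
  -- counting: fibers of K have cardinality at most ∏ q i ^ k i
  have hcount : ∀ k ∈ Finset.image K Finset.univ,
      (Finset.filter (fun L => K L = k) Finset.univ).card ≤ ∏ i : Fin n, q i ^ k i := by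
    intro k _
    have hqpos : ∀ i, 0 < q i := fun i => lt_of_lt_of_le two_pos (hq i)
    -- injection into tuples of vectors
    set f : (Fin N → Fin m) → (∀ i : Fin n, List.Vector (Fin (q i)) (k i)) :=
      fun L i => ⟨(encodeSeq c (List.ofFn L) i).take (k i) ++
        List.replicate (k i - (encodeSeq c (List.ofFn L) i).length) ⟨0, hqpos i⟩, by
          simp [List.length_take]; omega⟩ with hf
    have hinj : Set.InjOn f ↑(Finset.filter (fun L => K L = k) Finset.univ) := by
      intro L hL L' hL' hEq
      simp only [Finset.coe_filter, Set.mem_setOf_eq] at hL hL'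
      have hfL : ∀ (M : Fin N → Fin m), K M = k →
          ∀ i, (f M i).toList = encodeSeq c (List.ofFn M) i := by
        intro M hM i
        have hl : (encodeSeq c (List.ofFn M) i).length = k i := by rw [hlen, hM]
        show (encodeSeq c (List.ofFn M) i).take (k i) ++
          List.replicate (k i - (encodeSeq c (List.ofFn M) i).length) ⟨0, hqpos i⟩
            = encodeSeq c (List.ofFn M) i
        rw [← hl]
        simp
      have henc : encodeSeq c (List.ofFn L) = encodeSeq c (List.ofFn L') := by
        funext i
        rw [← hfL L hL.2 i, ← hfL L' hL'.2 i, hEq]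
      have := hud henc
      exact List.ofFn_injective this
    have hcard := Finset.card_le_card_of_injOn f (fun a _ => Finset.mem_univ (f a)) hinj
    calc (Finset.filter (fun L => K L = k) Finset.univ).card
        ≤ (Finset.univ : Finset (∀ i : Fin n, List.Vector (Fin (q i)) (k i))).card := hcard
      _ = ∏ i : Fin n, q i ^ k i := by
          rw [Finset.card_univ, Fintype.card_pi]
          refine Finset.prod_congr rfl fun i _ => ?_
          rw [card_vector, Fintype.card_fin]
  -- each grouped term is at most 1
  have hterm : ∀ k ∈ Finset.image K Finset.univ,
      (Finset.filter (fun L => K L = k) Finset.univ).card • (∏ i : Fin n, b i (k i)) ≤ 1 := by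
    intro k hk
    have hbpos : 0 ≤ ∏ i : Fin n, b i (k i) :=
      Finset.prod_nonneg fun i _ => pow_nonneg (inv_nonneg.2 (le_of_lt (hq0 i))) _
    rw [nsmul_eq_mul]
    calc ((Finset.filter (fun L => K L = k) Finset.univ).card : ℝ) * ∏ i : Fin n, b i (k i)
        ≤ ((∏ i : Fin n, q i ^ k i : ℕ) : ℝ) * ∏ i : Fin n, b i (k i) := by
          apply mul_le_mul_of_nonneg_right _ hbpos
          exact_mod_cast hcount k hk
      _ = 1 := by
          push_cast
          rw [← Finset.prod_mul_distrib]
          refine Finset.prod_eq_one fun i _ => ?_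
          rw [hb, ← mul_pow, mul_inv_cancel₀ (ne_of_gt (hq0 i)), one_pow]
  -- the image of K is inside a box of size (N*B+1)^n
  have himage : Finset.image K Finset.univ ⊆
      Fintype.piFinset (fun _ : Fin n => Finset.range (N * B + 1)) := by
    intro k hk
    rw [Finset.mem_image] at hk
    obtain ⟨L, _, rfl⟩ := hk
    rw [Fintype.mem_piFinset]
    intro i
    rw [Finset.mem_range, Nat.lt_succ_iff]
    calc K L i = ∑ t : Fin N, (c (L t) i).length := rfl
      _ ≤ ∑ _t : Fin N, B := Finset.sum_le_sum fun t _ => hB (L t) i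
      _ = N * B := by simp [Finset.sum_const, mul_comm]
  calc (∑ k ∈ Finset.image K Finset.univ,
        (Finset.filter (fun L => K L = k) Finset.univ).card • ∏ i : Fin n, b i (k i))
      ≤ ∑ _k ∈ Finset.image K Finset.univ, (1 : ℝ) := Finset.sum_le_sum hterm
    _ = ((Finset.image K Finset.univ).card : ℝ) := by simp
    _ ≤ (((Fintype.piFinset (fun _ : Fin n => Finset.range (N * B + 1))).card : ℕ) : ℝ) := by
        exact_mod_cast Finset.card_le_card himage
    _ = ((N * B + 1 : ℕ) : ℝ) ^ n := by
        rw [Fintype.card_piFinset]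
        push_cast
        simp [Finset.card_range]

/-- generalized Kraft inequality for uniquely decodable
`n`-channel source codes with heterogeneous alphabet sizes `qᵢ ≥ 2`:
`∑_{j=1}^{m} ∏_{i=1}^{n} qᵢ^{-ℓᵢʲ} ≤ 1`. -/
theorem stmt3 (m n : ℕ) (q : Fin n → ℕ) (hq : ∀ i, 2 ≤ q i)
    (c : Fin m → ∀ i : Fin n, List (Fin (q i)))
    (hud : Function.Injective (encodeSeq c)) :
    ∑ j : Fin m, ∏ i : Fin n, ((q i : ℝ)) ^ (-((c j i).length : ℤ)) ≤ 1 := by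
  set S : ℝ := ∑ j : Fin m, ∏ i : Fin n, ((q i : ℝ)) ^ (-((c j i).length : ℤ)) with hS
  by_contra hcon
  push_neg at hcon
  -- bound on all codeword lengths
  set B : ℕ := Finset.univ.sup (fun j : Fin m => Finset.univ.sup fun i : Fin n => (c j i).length)
    with hBdef
  have hB : ∀ j i, (c j i).length ≤ B := fun j i =>
    le_trans (Finset.le_sup (f := fun i : Fin n => (c j i).length) (Finset.mem_univ i))
      (Finset.le_sup (f := fun j : Fin m => Finset.univ.sup fun i : Fin n => (c j i).length)
        (Finset.mem_univ j))
  have hkey : ∀ N : ℕ, S ^ N ≤ ((N * B + 1 : ℕ) : ℝ) ^ n := fun N =>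
    key_bound m n q hq c hud B hB N
  have hS0 : (0 : ℝ) < S := lt_trans one_pos hcon
  -- exponential beats polynomial
  have htend := tendsto_pow_const_div_const_pow_of_one_lt n hcon
  have hev : ∀ᶠ N : ℕ in Filter.atTop, (N : ℝ) ^ n / S ^ N < (((B : ℝ) + 1) ^ n)⁻¹ := by
    apply htend.eventually_lt_const
    positivity
  obtain ⟨N, hN1, hNlt⟩ := (Filter.eventually_ge_atTop 1).and hev |>.exists
  have hSN : (0 : ℝ) < S ^ N := pow_pos hS0 N
  have h1 : ((N : ℝ) * B + 1) ≤ (N : ℝ) * ((B : ℝ) + 1) := by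
    have : (1 : ℝ) ≤ (N : ℝ) := by exact_mod_cast hN1
    nlinarith
  have h2 : S ^ N ≤ (N : ℝ) ^ n * ((B : ℝ) + 1) ^ n := by
    calc S ^ N ≤ ((N * B + 1 : ℕ) : ℝ) ^ n := hkey N
      _ = ((N : ℝ) * B + 1) ^ n := by push_cast; ring_nf
      _ ≤ ((N : ℝ) * ((B : ℝ) + 1)) ^ n := by
          apply pow_le_pow_left₀ (by positivity) h1
      _ = (N : ℝ) ^ n * ((B : ℝ) + 1) ^ n := mul_pow _ _ _
  -- derive the contradiction
  have hBpos : (0 : ℝ) < ((B : ℝ) + 1) ^ n := by positivity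
  rw [div_lt_iff₀ hSN, inv_mul_eq_div, lt_div_iff₀ hBpos] at hNlt
  linarith
end

section
/- Two codewords of an n-channel source code are prefix-free to each other if and only if the corresponding n-dimensional blocks in the packing model do not overlap. Precisely, given maximal lengths ℓᵢᵐᵃˣ per channel, the block associated to a codeword whose i-th component is the string sᵢ of length ℓᵢ is the box ∏_{i=1}^{n} [vᵢ(sᵢ)·qᵢ^{ℓᵢᵐᵃˣ-ℓᵢ}, (vᵢ(sᵢ)+1)·qᵢ^{ℓᵢᵐᵃˣ-ℓᵢ}), where vᵢ(sᵢ) is the integer whose base-qᵢ representation is sᵢ; two codewords have some channel in which neither component string is a prefix of the other if and only if the corresponding boxes are disjoint. -/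
/-- The integer whose base-`q` representation is the string `s`. -/
def strVal {q : ℕ} (s : List (Fin q)) : ℕ :=
  s.foldl (fun a d => a * q + d.val) 0

/-- The `n`-dimensional block associated to a codeword `s` given the maximal
lengths `L i` per channel: the box
`∏ᵢ [vᵢ(sᵢ)·qᵢ^{Lᵢ-ℓᵢ}, (vᵢ(sᵢ)+1)·qᵢ^{Lᵢ-ℓᵢ})`. -/
def codewordBlock {n : ℕ} {q : Fin n → ℕ} (L : Fin n → ℕ)
    (s : ∀ i : Fin n, List (Fin (q i))) : Set (Fin n → ℕ) :=
  {f | ∀ i : Fin n,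
    strVal (s i) * (q i) ^ (L i - (s i).length) ≤ f i ∧
    f i < (strVal (s i) + 1) * (q i) ^ (L i - (s i).length)}

lemma strVal_foldl {q : ℕ} (s : List (Fin q)) (a : ℕ) :
    s.foldl (fun a d => a * q + d.val) a = a * q ^ s.length + strVal s := by
  induction s generalizing a with
  | nil => simp [strVal]
  | cons d s ih =>
    simp only [List.foldl_cons, strVal, List.length_cons]
    rw [ih, ih (0 * q + d.val)]
    ring

lemma strVal_append {q : ℕ} (s u : List (Fin q)) :
    strVal (s ++ u) = strVal s * q ^ u.length + strVal u := by
  unfold strVal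
  rw [List.foldl_append, strVal_foldl]
  rfl

lemma strVal_cons {q : ℕ} (d : Fin q) (s : List (Fin q)) :
    strVal (d :: s) = d.val * q ^ s.length + strVal s := by
  have h := strVal_append [d] s
  simp only [List.singleton_append] at h
  rw [h]
  congr 1
  simp [strVal]

lemma strVal_lt {q : ℕ} (s : List (Fin q)) : strVal s < q ^ s.length := by
  induction s with
  | nil => simp [strVal]
  | cons d s ih =>
    rw [strVal_cons, List.length_cons]
    calc d.val * q ^ s.length + strVal s < d.val * q ^ s.length + q ^ s.length := by omega
      _ = (d.val + 1) * q ^ s.length := by ring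
      _ ≤ q * q ^ s.length := Nat.mul_le_mul_right _ d.isLt
      _ = q ^ (s.length + 1) := by ring

lemma strVal_inj {q : ℕ} {s t : List (Fin q)} (hl : s.length = t.length)
    (hv : strVal s = strVal t) : s = t := by
  induction s generalizing t with
  | nil => exact (List.length_eq_zero_iff.mp hl.symm).symm
  | cons d s ih =>
    cases t with
    | nil => simp at hl
    | cons e t =>
      have hl' : s.length = t.length := by simpa using hl
      rw [strVal_cons, strVal_cons, hl'] at hv
      have h1 : strVal s < q ^ t.length := hl' ▸ strVal_lt s
      have h2 : strVal t < q ^ t.length := strVal_lt t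
      have hde : d.val = e.val := by
        rcases Nat.lt_trichotomy d.val e.val with h | h | h
        · have : (d.val + 1) * q ^ t.length ≤ e.val * q ^ t.length :=
            Nat.mul_le_mul_right _ h
          nlinarith
        · exact h
        · have : (e.val + 1) * q ^ t.length ≤ d.val * q ^ t.length :=
            Nat.mul_le_mul_right _ h
          nlinarith
      have : strVal s = strVal t := by nlinarith
      rw [ih hl' this, Fin.ext hde]

/-- one direction per channel: prefix implies overlap witness -/
lemma overlap_of_prefix {q : ℕ} (hq : 2 ≤ q) {L : ℕ} {s t : List (Fin q)}
    (hs : s.length ≤ L) (ht : t.length ≤ L) (h : s <+: t) :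
    ∃ x, (strVal s * q ^ (L - s.length) ≤ x ∧ x < (strVal s + 1) * q ^ (L - s.length)) ∧
      (strVal t * q ^ (L - t.length) ≤ x ∧ x < (strVal t + 1) * q ^ (L - t.length)) := by
  obtain ⟨u, rfl⟩ := h
  refine ⟨strVal (s ++ u) * q ^ (L - (s ++ u).length), ⟨?_, ?_⟩, le_refl _, ?_⟩
  · rw [strVal_append]
    have hlen : L - s.length = u.length + (L - (s ++ u).length) := by
      simp at ht ⊢; omega
    rw [hlen, pow_add]
    nlinarith [pow_pos (by omega : 0 < q) (L - (s ++ u).length)]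
  · rw [strVal_append]
    have hlen : L - s.length = u.length + (L - (s ++ u).length) := by
      simp at ht ⊢; omega
    have hu : strVal u < q ^ u.length := strVal_lt u
    rw [hlen, pow_add]
    nlinarith [pow_pos (by omega : 0 < q) (L - (s ++ u).length)]
  · have : 0 < q ^ (L - (s ++ u).length) := pow_pos (by omega) _
    nlinarith

lemma interval_eq {a c K B r x : ℕ} (hB : 0 < B) (hK : 0 < K) (hr : r < K)
    (h1 : a * (K * B) ≤ x) (h2 : x < (a + 1) * (K * B))
    (h3 : (c * K + r) * B ≤ x) (h4 : x < (c * K + r + 1) * B) : a = c := by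
  have l1 : a * (K * B) < (c + 1) * (K * B) := by
    calc a * (K * B) ≤ x := h1
      _ < (c * K + r + 1) * B := h4
      _ ≤ (c + 1) * (K * B) := by
          rw [← mul_assoc]
          exact Nat.mul_le_mul_right _ (by nlinarith)
  have l2 : c * (K * B) < (a + 1) * (K * B) := by
    calc c * (K * B) = (c * K) * B := by ring
      _ ≤ (c * K + r) * B := Nat.mul_le_mul_right _ (by omega)
      _ ≤ x := h3
      _ < (a + 1) * (K * B) := h2
  have e1 : a < c + 1 := by
    by_contra h
    exact absurd (Nat.mul_le_mul_right (K * B) (by omega : c + 1 ≤ a)) (by omega)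
  have e2 : c < a + 1 := by
    by_contra h
    exact absurd (Nat.mul_le_mul_right (K * B) (by omega : a + 1 ≤ c)) (by omega)
  omega

/-- backward direction per channel, with WLOG length order -/
lemma prefix_of_overlap {q : ℕ} (hq : 2 ≤ q) {L : ℕ} {s t : List (Fin q)}
    (hs : s.length ≤ L) (ht : t.length ≤ L) (hlen : s.length ≤ t.length)
    {x : ℕ}
    (h1 : strVal s * q ^ (L - s.length) ≤ x) (h2 : x < (strVal s + 1) * q ^ (L - s.length))
    (h3 : strVal t * q ^ (L - t.length) ≤ x) (h4 : x < (strVal t + 1) * q ^ (L - t.length)) :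
    s <+: t := by
  have hT : strVal t = strVal (t.take s.length) * q ^ (t.length - s.length)
      + strVal (t.drop s.length) := by
    conv_lhs => rw [← List.take_append_drop s.length t]
    rw [strVal_append]
    congr 2
    simp
  have hr : strVal (t.drop s.length) < q ^ (t.length - s.length) := by
    have := strVal_lt (t.drop s.length)
    simpa using this
  have hA : L - s.length = (t.length - s.length) + (L - t.length) := by omega
  rw [hA, pow_add] at h1 h2
  rw [hT] at h3 h4
  have hceq : strVal s = strVal (t.take s.length) :=
    interval_eq (pow_pos (by omega) _) (pow_pos (by omega) _) hr h1 h2 h3 h4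
  have heq : s = t.take s.length := strVal_inj (by simp; omega) hceq
  rw [heq]
  exact List.take_prefix _ _

lemma channel_iff {q : ℕ} (hq : 2 ≤ q) {L : ℕ} {s t : List (Fin q)}
    (hs : s.length ≤ L) (ht : t.length ≤ L) :
    (s <+: t ∨ t <+: s) ↔
    ∃ x, (strVal s * q ^ (L - s.length) ≤ x ∧ x < (strVal s + 1) * q ^ (L - s.length)) ∧
      (strVal t * q ^ (L - t.length) ≤ x ∧ x < (strVal t + 1) * q ^ (L - t.length)) := by
  constructor
  · rintro (h | h)
    · exact overlap_of_prefix hq hs ht h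
    · obtain ⟨x, h1, h2⟩ := overlap_of_prefix hq ht hs h
      exact ⟨x, h2, h1⟩
  · rintro ⟨x, ⟨h1, h2⟩, h3, h4⟩
    rcases le_total s.length t.length with hl | hl
    · exact Or.inl (prefix_of_overlap hq hs ht hl h1 h2 h3 h4)
    · exact Or.inr (prefix_of_overlap hq ht hs hl h3 h4 h1 h2)

/-- two codewords are prefix-free to each other (some channel in which
neither component is a prefix of the other) iff their associated blocks are
disjoint. -/
theorem stmt5 (n : ℕ) (q : Fin n → ℕ) (hq : ∀ i, 2 ≤ q i)
    (L : Fin n → ℕ) (s t : ∀ i : Fin n, List (Fin (q i)))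
    (hsL : ∀ i, (s i).length ≤ L i) (htL : ∀ i, (t i).length ≤ L i) :
    (∃ i : Fin n, ¬ (s i) <+: (t i) ∧ ¬ (t i) <+: (s i)) ↔
      codewordBlock L s ∩ codewordBlock L t = ∅ := by
  rw [← not_iff_not]
  push_neg
  constructor
  · intro h
    have hx : ∀ i, ∃ x,
        (strVal (s i) * (q i) ^ (L i - (s i).length) ≤ x ∧
          x < (strVal (s i) + 1) * (q i) ^ (L i - (s i).length)) ∧
        (strVal (t i) * (q i) ^ (L i - (t i).length) ≤ x ∧
          x < (strVal (t i) + 1) * (q i) ^ (L i - (t i).length)) := by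
      intro i
      refine (channel_iff (hq i) (hsL i) (htL i)).mp ?_
      by_cases hp : s i <+: t i
      · exact Or.inl hp
      · exact Or.inr (h i hp)
    choose f hf using hx
    exact ⟨f, fun i => (hf i).1, fun i => (hf i).2⟩
  · rintro ⟨f, hf1, hf2⟩ i _
    rcases (channel_iff (hq i) (hsL i) (htL i)).mpr ⟨f i, hf1 i, hf2 i⟩ with h | h
    · tauto
    · exact h
end

section
/- Let C be a container and let [w,h] ⪰ [w',h'] be regular sizes (w' | w as powers of q1, h' | h as powers of q2). Let R be the union of a subset R' of the remainder regions of C with respect to [w,h] that forms a rectangle. Then the quotient containers of size [w',h'] contained in R are exactly the union over R'' ∈ R' of the quotient containers of size [w',h'] contained in R''. In other words, no regular aligned region of size [w',h'] lies across the boundary between two remainder regions. -/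
/-- The half-open rectangular region `[x, x+w) × [y, y+h) ⊆ ℤ²`. -/
def Reg (x y w h : ℤ) : Set (ℤ × ℤ) :=
  Set.Ico x (x + w) ×ˢ Set.Ico y (y + h)

/-- The set of quotient containers of size `[w,h]` contained in the set `C`:
all regular aligned regions `[x,x+w)×[y,y+h) ⊆ C` with `w ∣ x`, `h ∣ y`. -/
def QuoCon (C : Set (ℤ × ℤ)) (w h : ℤ) : Set (Set (ℤ × ℤ)) :=
  {S | ∃ x y : ℤ, S = Reg x y w h ∧ w ∣ x ∧ h ∣ y ∧ Reg x y w h ⊆ C}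

/-- Least multiple of `w` that is `≥ x` (for `w > 0`). -/
def ceilMul (w x : ℤ) : ℤ := w * (-((-x) / w))

/-- Greatest multiple of `w` that is `≤ x` (for `w > 0`). -/
def floorMul (w x : ℤ) : ℤ := w * (x / w)

/-- The (at most 8) remainder regions obtained by removing the union
`[xQ, xR) × [yQ, yR)` of the quotient containers of size `[w,h]` from the
container `[xC, xC+wC) × [yC, yC+hC)`.  If there are no quotient containers,
the whole container is the single remainder region. -/
def RemReg (xC yC wC hC w h : ℤ) : Set (Set (ℤ × ℤ)) :=
  let xQ := ceilMul w xC
  let xR := floorMul w (xC + wC)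
  let yQ := ceilMul h yC
  let yR := floorMul h (yC + hC)
  if xQ < xR ∧ yQ < yR then
    { Reg xC yR (xQ - xC) (yC + hC - yR), Reg xQ yR (xR - xQ) (yC + hC - yR),
      Reg xR yR (xC + wC - xR) (yC + hC - yR),
      Reg xC yQ (xQ - xC) (yR - yQ), Reg xR yQ (xC + wC - xR) (yR - yQ),
      Reg xC yC (xQ - xC) (yQ - yC), Reg xQ yC (xR - xQ) (yQ - yC),
      Reg xR yC (xC + wC - xR) (yQ - yC) }
  else { Reg xC yC wC hC }

/-!
The cut lines of the remainder decomposition with respect to `[w,h]` are multiples of `w`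
(resp. `h`), hence of `w'` (resp. `h'`), because for powers of a common base `q > 1` the
dominance `w' ≤ w` forces `w' ∣ w`. An aligned interval `[x, x+w')` with `w' ∣ x` has no
multiple of `w'` in its interior, so an aligned region of size `[w',h']` never crosses a cut
line; lying inside the container, it is contained in the remainder region holding its corner.
-/

lemma pow_dvd_pow_of_pow_le {q : ℤ} (hq : 1 < q) {m n : ℕ} (h : q ^ m ≤ q ^ n) :
    q ^ m ∣ q ^ n :=
  pow_dvd_pow q ((pow_le_pow_iff_right₀ hq).mp h)

lemma le_ceilMul (w x : ℤ) (hw : w ≠ 0) : x ≤ ceilMul w x := by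
  have := Int.mul_ediv_add_emod (-x) w
  have := Int.emod_nonneg (-x) hw
  rw [ceilMul]
  linarith

lemma floorMul_le (w x : ℤ) (hw : w ≠ 0) : floorMul w x ≤ x := by
  have := Int.mul_ediv_add_emod x w
  have := Int.emod_nonneg x hw
  rw [floorMul]
  linarith

lemma le_or_add_le_of_dvd {d x c : ℤ} (hx : d ∣ x) (hc : d ∣ c) : c ≤ x ∨ x + d ≤ c := by
  by_contra! h
  have : d ≤ c - x := Int.le_of_dvd (by omega) (dvd_sub hc hx)
  omega

lemma mem_Reg_self {x y w h : ℤ} (hw : 0 < w) (hh : 0 < h) : (x, y) ∈ Reg x y w h := by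
  simp only [Reg, Set.mem_prod, Set.mem_Ico]
  omega

lemma subset_Reg_of_mem_RemReg {xC yC wC hC w h : ℤ} (hw : w ≠ 0) (hh : h ≠ 0)
    {T : Set (ℤ × ℤ)} (hT : T ∈ RemReg xC yC wC hC w h) : T ⊆ Reg xC yC wC hC := by
  have := le_ceilMul w xC hw
  have := floorMul_le w (xC + wC) hw
  have := le_ceilMul h yC hh
  have := floorMul_le h (yC + hC) hh
  simp only [RemReg] at hT
  split_ifs at hT
  · simp only [Set.mem_insert_iff, Set.mem_singleton_iff] at hT
    rcases hT with rfl | rfl | rfl | rfl | rfl | rfl | rfl | rfl <;>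
    · rintro ⟨px, py⟩ hp
      simp only [Reg, Set.mem_prod, Set.mem_Ico] at hp ⊢
      omega
  · rw [Set.mem_singleton_iff.mp hT]

lemma Reg_subset_of_mem_RemReg {xC yC wC hC w h w' h' x y : ℤ}
    (hw : w' ∣ w) (hh : h' ∣ h) (hx : w' ∣ x) (hy : h' ∣ y)
    {T : Set (ℤ × ℤ)} (hT : T ∈ RemReg xC yC wC hC w h) (hxyT : (x, y) ∈ T)
    (hsub : Reg x y w' h' ⊆ Reg xC yC wC hC) : Reg x y w' h' ⊆ T := by
  simp only [RemReg] at hT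
  split_ifs at hT
  · have := le_or_add_le_of_dvd (c := ceilMul w xC) hx (hw.trans (dvd_mul_right _ _))
    have := le_or_add_le_of_dvd (c := floorMul w (xC + wC)) hx (hw.trans (dvd_mul_right _ _))
    have := le_or_add_le_of_dvd (c := ceilMul h yC) hy (hh.trans (dvd_mul_right _ _))
    have := le_or_add_le_of_dvd (c := floorMul h (yC + hC)) hy (hh.trans (dvd_mul_right _ _))
    simp only [Set.mem_insert_iff, Set.mem_singleton_iff] at hT
    rintro ⟨px, py⟩ hp
    have hpC := hsub hp
    simp only [Reg, Set.mem_prod, Set.mem_Ico] at hp hpC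
    rcases hT with rfl | rfl | rfl | rfl | rfl | rfl | rfl | rfl <;>
    · simp only [Reg, Set.mem_prod, Set.mem_Ico] at hxyT ⊢
      omega
  · rwa [Set.mem_singleton_iff.mp hT]

lemma QuoCon_sUnion {F : Set (Set (ℤ × ℤ))} {w h : ℤ} (hw : 0 < w) (hh : 0 < h)
    (hF : ∀ T ∈ F, ∀ x y, w ∣ x → h ∣ y → (x, y) ∈ T → Reg x y w h ⊆ ⋃₀ F →
      Reg x y w h ⊆ T) :
    QuoCon (⋃₀ F) w h = ⋃ T ∈ F, QuoCon T w h := by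
  ext S
  simp only [QuoCon, Set.mem_ofPred_eq, Set.mem_iUnion, exists_prop]
  constructor
  · rintro ⟨x, y, rfl, hx, hy, hsub⟩
    obtain ⟨T, hT, hxyT⟩ := hsub (mem_Reg_self hw hh)
    exact ⟨T, hT, x, y, rfl, hx, hy, hF T hT x y hx hy hxyT hsub⟩
  · rintro ⟨T, hT, x, y, rfl, hx, hy, hsub⟩
    exact ⟨x, y, rfl, hx, hy, hsub.trans (Set.subset_sUnion_of_mem hT)⟩

theorem stmt8_general (q1 q2 : ℕ) (hq1 : 1 < q1) (hq2 : 1 < q2)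
    (a a' b b' : ℕ) (w w' h h' : ℤ)
    (hw : w = (q1 : ℤ) ^ a) (hw' : w' = (q1 : ℤ) ^ a')
    (hh : h = (q2 : ℤ) ^ b) (hh' : h' = (q2 : ℤ) ^ b')
    (hdomw : w' ≤ w) (hdomh : h' ≤ h)
    (xC yC wC hC : ℤ)
    (R' : Set (Set (ℤ × ℤ))) (hR' : R' ⊆ RemReg xC yC wC hC w h) :
    QuoCon (⋃₀ R') w' h' = ⋃ R'' ∈ R', QuoCon R'' w' h' := by
  have hq1' : (1 : ℤ) < q1 := by exact_mod_cast hq1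
  have hq2' : (1 : ℤ) < q2 := by exact_mod_cast hq2
  subst hw hw' hh hh'
  have hw0 : (q1 : ℤ) ^ a ≠ 0 := pow_ne_zero a (by omega)
  have hh0 : (q2 : ℤ) ^ b ≠ 0 := pow_ne_zero b (by omega)
  have hunion : ⋃₀ R' ⊆ Reg xC yC wC hC := Set.sUnion_subset fun T hT =>
    subset_Reg_of_mem_RemReg hw0 hh0 (hR' hT)
  refine QuoCon_sUnion (pow_pos (by omega) a') (pow_pos (by omega) b') ?_
  intro T hT x y hx hy hxyT hsub
  exact Reg_subset_of_mem_RemReg (pow_dvd_pow_of_pow_le hq1' hdomw)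
    (pow_dvd_pow_of_pow_le hq2' hdomh) hx hy (hR' hT) hxyT (hsub.trans hunion)

/-- if a subset `R'` of the remainder regions of `C` w.r.t. a regular
size `[w,h]` covers a rectangular space, then the quotient containers of a regular
size `[w',h'] ⪯ [w,h]` contained in that rectangle are exactly the union of the
quotient containers contained in the individual remainder regions: no regular
aligned region of size `[w',h']` lies across a boundary between remainder regions. -/
theorem stmt8 (q1 q2 : ℕ) (hq1 : 1 < q1) (hq2 : 1 < q2)
    (a a' b b' : ℕ) (w w' h h' : ℤ)
    (hw : w = (q1 : ℤ) ^ a) (hw' : w' = (q1 : ℤ) ^ a')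
    (hh : h = (q2 : ℤ) ^ b) (hh' : h' = (q2 : ℤ) ^ b')
    (hdomw : w' ≤ w) (hdomh : h' ≤ h)
    (xC yC wC hC : ℤ) (hwC : 0 < wC) (hhC : 0 < hC)
    (R' : Set (Set (ℤ × ℤ))) (hR' : R' ⊆ RemReg xC yC wC hC w h)
    (xR yR wR hR : ℤ) (hrect : ⋃₀ R' = Reg xR yR wR hR) :
    QuoCon (⋃₀ R') w' h' = ⋃ R'' ∈ R', QuoCon R'' w' h' :=
  stmt8_general q1 q2 hq1 hq2 a a' b b' w w' h h' hw hw' hh hh' hdomw hdomh xC yC wC hC R' hR'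
end

section
/- For any container C (a rectangle [x_C, x_C+w_C) × [y_C, y_C+h_C) with integer coordinates) and any regular size [w,h], there is a unique smallest set of pairwise non-overlapping regular aligned containers, each of size ⪯ [w,h], whose union equals C (if any such set exists). Hence the container cutting function σ(C,[w,h]) is well-defined. -/
/-- `GoodCut q1 q2 w h C S` : `S` is a finite set of pairwise non-overlapping
regular aligned containers, each of size `⪯ [w,h]`, whose union is `C`. -/
def GoodCut (q1 q2 : ℕ) (w h : ℤ) (C : Set (ℤ × ℤ)) (S : Set (Set (ℤ × ℤ))) : Prop :=
  S.Finite ∧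
  (∀ R ∈ S, ∃ (x y a bb : ℤ) (i j : ℕ),
      R = Reg x y a bb ∧ a = (q1 : ℤ) ^ i ∧ bb = (q2 : ℤ) ^ j ∧
      a ∣ x ∧ bb ∣ y ∧ a ≤ w ∧ bb ≤ h) ∧
  (∀ R1 ∈ S, ∀ R2 ∈ S, R1 ≠ R2 → R1 ∩ R2 = ∅) ∧
  ⋃₀ S = C

def IsMinimalCut (q1 q2 : ℕ) (w h : ℤ) (C : Set (ℤ × ℤ)) (S : Set (Set (ℤ × ℤ))) : Prop :=
  GoodCut q1 q2 w h C S ∧ ∀ T, GoodCut q1 q2 w h C T → S.ncard ≤ T.ncard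

section Reg

variable {x y w h m : ℤ}

lemma mem_Reg {p : ℤ × ℤ} : p ∈ Reg x y w h ↔ (x ≤ p.1 ∧ p.1 < x + w) ∧ y ≤ p.2 ∧ p.2 < y + h :=
  Iff.rfl

lemma Reg_nonempty (hw : 0 < w) (hh : 0 < h) : (Reg x y w h).Nonempty :=
  ⟨(x, y), by simp only [mem_Reg]; omega⟩

lemma Reg_subset_Reg_iff {x' y' w' h' : ℤ} (hw : 0 < w) (hh : 0 < h) :
    Reg x y w h ⊆ Reg x' y' w' h' ↔ x' ≤ x ∧ x + w ≤ x' + w' ∧ y' ≤ y ∧ y + h ≤ y' + h' := by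
  rw [Reg, Reg, Set.prod_subset_prod_iff' (Reg_nonempty hw hh),
    Set.Ico_subset_Ico_iff (by omega), Set.Ico_subset_Ico_iff (by omega), and_assoc]

lemma Reg_eq_union_fst (hxm : x ≤ m) (hmx : m ≤ x + w) :
    Reg x y w h = Reg x y (m - x) h ∪ Reg m y (x + w - m) h := by
  ext p
  simp only [Set.mem_union, mem_Reg]
  omega

lemma Reg_eq_union_snd (hym : y ≤ m) (hmy : m ≤ y + h) :
    Reg x y w h = Reg x y w (m - y) ∪ Reg x m w (y + h - m) := by
  ext p
  simp only [Set.mem_union, mem_Reg]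
  omega

lemma disjoint_Reg_fst {y' w' h' : ℤ} : Disjoint (Reg x y (m - x) h) (Reg m y' w' h') := by
  rw [Set.disjoint_left]
  intro p
  simp only [mem_Reg]
  omega

lemma disjoint_Reg_snd {x' w' h' : ℤ} : Disjoint (Reg x y w (m - y)) (Reg x' m w' h') := by
  rw [Set.disjoint_left]
  intro p
  simp only [mem_Reg]
  omega

end Reg

lemma Set.eq_sep_union_sep {α : Type*} {s : Set α} {p q : α → Prop} (h : ∀ a ∈ s, p a ∨ q a) :
    s = {a ∈ s | p a} ∪ {a ∈ s | q a} := by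
  rw [← Set.sep_or, Set.sep_eq_self_iff_mem_true.2 h]

lemma Int.add_le_or_le_of_dvd {d x m : ℤ} (hx : d ∣ x) (hm : d ∣ m) :
    x + d ≤ m ∨ m ≤ x := by
  rcases le_or_gt m x with hmx | hxm
  · exact Or.inr hmx
  · have := Int.le_of_dvd (by omega) (dvd_sub hm hx)
    omega

lemma Int.eq_and_dvd_of_not_exists_dvd {d x l : ℤ} (hd : 0 < d) (hdl : d ≤ l)
    (h : ¬ ∃ m ∈ Set.Ioo x (x + l), d ∣ m) : l = d ∧ d ∣ x := by
  have hr := Int.emod_nonneg x hd.ne'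
  have hr' := Int.emod_lt_of_pos x hd
  have hx := Int.emod_add_mul_ediv x d
  have hnext : ¬ (x < d * (x / d) + d ∧ d * (x / d) + d < x + l) := fun hlt =>
    h ⟨_, hlt, dvd_add (dvd_mul_right _ _) dvd_rfl⟩
  exact ⟨by omega, Int.dvd_of_emod_eq_zero (by omega)⟩

namespace GoodCut

variable {q1 q2 : ℕ} {w h : ℤ} {C C₁ C₂ : Set (ℤ × ℤ)} {S T : Set (Set (ℤ × ℤ))} {R : Set (ℤ × ℤ)}

lemma subset_of_mem (hS : GoodCut q1 q2 w h C S) (hR : R ∈ S) : R ⊆ C :=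
  hS.2.2.2 ▸ Set.subset_sUnion_of_mem hR

lemma nonempty_of_mem (hq1 : 0 < q1) (hq2 : 0 < q2) (hS : GoodCut q1 q2 w h C S) (hR : R ∈ S) :
    R.Nonempty := by
  obtain ⟨x, y, _, _, i, j, rfl, rfl, rfl, -⟩ := hS.2.1 R hR
  exact Reg_nonempty (by positivity) (by positivity)

lemma mono {w' h' : ℤ} (hS : GoodCut q1 q2 w h C S) (hw : w ≤ w') (hh : h ≤ h') :
    GoodCut q1 q2 w' h' C S := by
  refine ⟨hS.1, fun R hR => ?_, hS.2.2⟩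
  obtain ⟨x, y, a, b, i, j, hR, ha, hb, hax, hby, haw, hbh⟩ := hS.2.1 R hR
  exact ⟨x, y, a, b, i, j, hR, ha, hb, hax, hby, haw.trans hw, hbh.trans hh⟩

lemma union (hS : GoodCut q1 q2 w h C₁ S) (hT : GoodCut q1 q2 w h C₂ T) (hd : Disjoint C₁ C₂) :
    GoodCut q1 q2 w h (C₁ ∪ C₂) (S ∪ T) := by
  have cross : ∀ R₁ ∈ S, ∀ R₂ ∈ T, R₁ ∩ R₂ = ∅ := fun R₁ h₁ R₂ h₂ =>
    (hd.mono (hS.subset_of_mem h₁) (hT.subset_of_mem h₂)).inter_eq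
  refine ⟨hS.1.union hT.1, ?_, ?_, by rw [Set.sUnion_union, hS.2.2.2, hT.2.2.2]⟩
  · rintro R (hR | hR)
    exacts [hS.2.1 R hR, hT.2.1 R hR]
  · rintro R₁ (h₁ | h₁) R₂ (h₂ | h₂) hne
    · exact hS.2.2.1 R₁ h₁ R₂ h₂ hne
    · exact cross R₁ h₁ R₂ h₂
    · exact Set.inter_comm R₁ R₂ ▸ cross R₂ h₂ R₁ h₁
    · exact hT.2.2.1 R₁ h₁ R₂ h₂ hne

lemma sep (hS : GoodCut q1 q2 w h (C₁ ∪ C₂) S) (hd : Disjoint C₁ C₂)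
    (hsplit : ∀ R ∈ S, R ⊆ C₁ ∨ R ⊆ C₂) : GoodCut q1 q2 w h C₁ {R ∈ S | R ⊆ C₁} := by
  refine ⟨hS.1.sep _, fun R hR => hS.2.1 R hR.1, fun R₁ h₁ R₂ h₂ => hS.2.2.1 R₁ h₁.1 R₂ h₂.1, ?_⟩
  refine (Set.sUnion_subset fun R hR => hR.2).antisymm fun p hp => ?_
  obtain ⟨R, hR, hpR⟩ := (hS.2.2.2 ▸ Set.mem_union_left C₂ hp : p ∈ ⋃₀ S)
  rcases hsplit R hR with hR₁ | hR₂
  · exact ⟨R, ⟨hR, hR₁⟩, hpR⟩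
  · exact absurd (hR₂ hpR) (Set.disjoint_left.1 hd hp)

end GoodCut

namespace IsMinimalCut

variable {q1 q2 : ℕ} {w h : ℤ} {C C₁ C₂ : Set (ℤ × ℤ)} {S : Set (Set (ℤ × ℤ))}

lemma sep (hq1 : 0 < q1) (hq2 : 0 < q2) (hS : IsMinimalCut q1 q2 w h (C₁ ∪ C₂) S)
    (hd : Disjoint C₁ C₂) (hsplit : ∀ R ∈ S, R ⊆ C₁ ∨ R ⊆ C₂) :
    IsMinimalCut q1 q2 w h C₁ {R ∈ S | R ⊆ C₁} := by
  have hS₂ : GoodCut q1 q2 w h C₂ {R ∈ S | R ⊆ C₂} :=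
    (Set.union_comm C₁ C₂ ▸ hS.1).sep hd.symm fun R hR => (hsplit R hR).symm
  have hdisj : Disjoint {R ∈ S | R ⊆ C₁} {R ∈ S | R ⊆ C₂} := by
    refine Set.disjoint_left.2 fun R h₁ h₂ => ?_
    obtain ⟨p, hp⟩ := hS.1.nonempty_of_mem hq1 hq2 h₁.1
    exact Set.disjoint_left.1 hd (h₁.2 hp) (h₂.2 hp)
  have hcard : S.ncard = {R ∈ S | R ⊆ C₁}.ncard + {R ∈ S | R ⊆ C₂}.ncard := by
    conv_lhs => rw [Set.eq_sep_union_sep hsplit]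
    exact Set.ncard_union_eq hdisj (hS.1.1.sep _) (hS.1.1.sep _)
  refine ⟨hS.1.sep hd hsplit, fun T hT => ?_⟩
  have := hS.2 _ (hT.union hS₂ hd)
  have := Set.ncard_union_le T {R ∈ S | R ⊆ C₂}
  omega

lemma eq_singleton (hS : IsMinimalCut q1 q2 w h C S) (hC : GoodCut q1 q2 w h C {C})
    (hne : C.Nonempty) : S = {C} := by
  rcases (Set.ncard_le_one_iff_eq hS.1.1).1 (by simpa using hS.2 _ hC) with rfl | ⟨R, rfl⟩
  · exact absurd (Set.sUnion_empty ▸ hS.1.2.2.2).symm hne.ne_empty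
  · rw [← Set.sUnion_singleton R, hS.1.2.2.2]

end IsMinimalCut

lemma subsingleton_isMinimalCut_union {q1 q2 : ℕ} {w h : ℤ} {C₁ C₂ : Set (ℤ × ℤ)}
    (hq1 : 0 < q1) (hq2 : 0 < q2) (hd : Disjoint C₁ C₂)
    (hsplit : ∀ S, GoodCut q1 q2 w h (C₁ ∪ C₂) S → ∀ R ∈ S, R ⊆ C₁ ∨ R ⊆ C₂)
    (h₁ : {S | IsMinimalCut q1 q2 w h C₁ S}.Subsingleton)
    (h₂ : {S | IsMinimalCut q1 q2 w h C₂ S}.Subsingleton) :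
    {S | IsMinimalCut q1 q2 w h (C₁ ∪ C₂) S}.Subsingleton := by
  have sep₂ : ∀ {S}, IsMinimalCut q1 q2 w h (C₁ ∪ C₂) S →
      IsMinimalCut q1 q2 w h C₂ {R ∈ S | R ⊆ C₂} := fun hS =>
    (Set.union_comm C₁ C₂ ▸ hS).sep hq1 hq2 hd.symm fun R hR => (hsplit _ hS.1 R hR).symm
  intro S hS S' hS'
  rw [Set.eq_sep_union_sep (hsplit S hS.1), Set.eq_sep_union_sep (hsplit S' hS'.1),
    h₁ (hS.sep hq1 hq2 hd (hsplit S hS.1)) (hS'.sep hq1 hq2 hd (hsplit S' hS'.1)),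
    h₂ (sep₂ hS) (sep₂ hS')]

namespace GoodCut

variable {q1 q2 a b : ℕ} {w h x y wC hC m : ℤ} {S : Set (Set (ℤ × ℤ))}

lemma subset_or_subset_of_dvd_fst (hq1 : 1 < q1)
    (hS : GoodCut q1 q2 ((q1 : ℤ) ^ a) h (Reg x y wC hC) S) (hm : (q1 : ℤ) ^ a ∣ m) :
    ∀ R ∈ S, R ⊆ Reg x y (m - x) hC ∨ R ⊆ Reg m y (x + wC - m) hC := by
  intro R hR
  have hRC := hS.subset_of_mem hR
  obtain ⟨x', y', _, _, i, j, rfl, rfl, rfl, hx', -, hia, -⟩ := hS.2.1 _ hR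
  have hdvd : (q1 : ℤ) ^ i ∣ m :=
    (pow_dvd_pow _ ((pow_le_pow_iff_right₀ (by exact_mod_cast hq1)).1 hia)).trans hm
  rcases Int.add_le_or_le_of_dvd hx' hdvd with hleft | hright
  · refine Or.inl fun p hp => ?_
    have := hRC hp
    rw [mem_Reg] at *
    omega
  · refine Or.inr fun p hp => ?_
    have := hRC hp
    rw [mem_Reg] at *
    omega

lemma subset_or_subset_of_dvd_snd (hq2 : 1 < q2)
    (hS : GoodCut q1 q2 w ((q2 : ℤ) ^ b) (Reg x y wC hC) S) (hm : (q2 : ℤ) ^ b ∣ m) :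
    ∀ R ∈ S, R ⊆ Reg x y wC (m - y) ∨ R ⊆ Reg x m wC (y + hC - m) := by
  intro R hR
  have hRC := hS.subset_of_mem hR
  obtain ⟨x', y', _, _, i, j, rfl, rfl, rfl, -, hy', -, hjb⟩ := hS.2.1 _ hR
  have hdvd : (q2 : ℤ) ^ j ∣ m :=
    (pow_dvd_pow _ ((pow_le_pow_iff_right₀ (by exact_mod_cast hq2)).1 hjb)).trans hm
  rcases Int.add_le_or_le_of_dvd hy' hdvd with hbelow | habove
  · refine Or.inl fun p hp => ?_
    have := hRC hp
    rw [mem_Reg] at *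
    omega
  · refine Or.inr fun p hp => ?_
    have := hRC hp
    rw [mem_Reg] at *
    omega

/-- In a container narrower than `q1 ^ (a + 1)` no piece can have that width. -/
lemma pow_succ_fst_iff (hq1 : 1 < q1) (hq2 : 0 < q2) (hw : wC < (q1 : ℤ) ^ (a + 1)) :
    GoodCut q1 q2 ((q1 : ℤ) ^ (a + 1)) h (Reg x y wC hC) S ↔
      GoodCut q1 q2 ((q1 : ℤ) ^ a) h (Reg x y wC hC) S := by
  have hq : (1 : ℤ) < q1 := by exact_mod_cast hq1
  refine ⟨fun hS => ⟨hS.1, fun R hR => ?_, hS.2.2⟩,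
    fun hS => hS.mono (pow_le_pow_right₀ hq.le a.le_succ) le_rfl⟩
  obtain ⟨x', y', _, _, i, j, rfl, rfl, rfl, hx', hy', -, hjb⟩ := hS.2.1 R hR
  have hRC := (Reg_subset_Reg_iff (by positivity) (by positivity)).1 (hS.subset_of_mem hR)
  have hia : i < a + 1 := (pow_lt_pow_iff_right₀ hq).1 (by omega)
  exact ⟨x', y', _, _, i, j, rfl, rfl, rfl, hx', hy',
    pow_le_pow_right₀ hq.le (Nat.lt_succ_iff.1 hia), hjb⟩

lemma pow_succ_snd_iff (hq1 : 0 < q1) (hq2 : 1 < q2) (hh : hC < (q2 : ℤ) ^ (b + 1)) :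
    GoodCut q1 q2 w ((q2 : ℤ) ^ (b + 1)) (Reg x y wC hC) S ↔
      GoodCut q1 q2 w ((q2 : ℤ) ^ b) (Reg x y wC hC) S := by
  have hq : (1 : ℤ) < q2 := by exact_mod_cast hq2
  refine ⟨fun hS => ⟨hS.1, fun R hR => ?_, hS.2.2⟩,
    fun hS => hS.mono le_rfl (pow_le_pow_right₀ hq.le b.le_succ)⟩
  obtain ⟨x', y', _, _, i, j, rfl, rfl, rfl, hx', hy', hia, -⟩ := hS.2.1 R hR
  have hRC := (Reg_subset_Reg_iff (by positivity) (by positivity)).1 (hS.subset_of_mem hR)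
  have hjb : j < b + 1 := (pow_lt_pow_iff_right₀ hq).1 (by omega)
  exact ⟨x', y', _, _, i, j, rfl, rfl, rfl, hx', hy', hia,
    pow_le_pow_right₀ hq.le (Nat.lt_succ_iff.1 hjb)⟩

lemma singleton_Reg (hx : (q1 : ℤ) ^ a ∣ x) (hy : (q2 : ℤ) ^ b ∣ y) :
    GoodCut q1 q2 ((q1 : ℤ) ^ a) ((q2 : ℤ) ^ b) (Reg x y ((q1 : ℤ) ^ a) ((q2 : ℤ) ^ b))
      {Reg x y ((q1 : ℤ) ^ a) ((q2 : ℤ) ^ b)} := by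
  refine ⟨Set.finite_singleton _, ?_, ?_, Set.sUnion_singleton _⟩
  · rintro R rfl
    exact ⟨x, y, _, _, a, b, rfl, rfl, rfl, hx, hy, le_rfl, le_rfl⟩
  · rintro R₁ rfl R₂ rfl hne
    exact absurd rfl hne

end GoodCut

theorem subsingleton_isMinimalCut_Reg {q1 q2 : ℕ} (hq1 : 1 < q1) (hq2 : 1 < q2) (a b : ℕ)
    (x y wC hC : ℤ) (hwC : 0 < wC) (hhC : 0 < hC) :
    {S | IsMinimalCut q1 q2 ((q1 : ℤ) ^ a) ((q2 : ℤ) ^ b) (Reg x y wC hC) S}.Subsingleton := by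
  have hw : (0 : ℤ) < (q1 : ℤ) ^ a := by positivity
  have hh : (0 : ℤ) < (q2 : ℤ) ^ b := by positivity
  by_cases hxm : ∃ m ∈ Set.Ioo x (x + wC), (q1 : ℤ) ^ a ∣ m
  · obtain ⟨m, ⟨hxm, hmx⟩, hm⟩ := hxm
    rw [Reg_eq_union_fst hxm.le hmx.le]
    exact subsingleton_isMinimalCut_union (by omega) (by omega) disjoint_Reg_fst
      (fun S hS => (Reg_eq_union_fst hxm.le hmx.le ▸ hS).subset_or_subset_of_dvd_fst hq1 hm)
      (subsingleton_isMinimalCut_Reg hq1 hq2 a b x y (m - x) hC (by omega) hhC)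
      (subsingleton_isMinimalCut_Reg hq1 hq2 a b m y (x + wC - m) hC (by omega) hhC)
  by_cases hym : ∃ m ∈ Set.Ioo y (y + hC), (q2 : ℤ) ^ b ∣ m
  · obtain ⟨m, ⟨hym, hmy⟩, hm⟩ := hym
    rw [Reg_eq_union_snd hym.le hmy.le]
    exact subsingleton_isMinimalCut_union (by omega) (by omega) disjoint_Reg_snd
      (fun S hS => (Reg_eq_union_snd hym.le hmy.le ▸ hS).subset_or_subset_of_dvd_snd hq2 hm)
      (subsingleton_isMinimalCut_Reg hq1 hq2 a b x y wC (m - y) hwC (by omega))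
      (subsingleton_isMinimalCut_Reg hq1 hq2 a b x m wC (y + hC - m) hwC (by omega))
  rcases lt_or_ge wC ((q1 : ℤ) ^ a) with hwa | hwa
  · obtain ⟨a, rfl⟩ := Nat.exists_eq_add_one_of_ne_zero
      (show a ≠ 0 by rintro rfl; rw [pow_zero] at hwa; omega)
    simpa only [IsMinimalCut, GoodCut.pow_succ_fst_iff hq1 (Nat.zero_lt_of_lt hq2) hwa] using
      subsingleton_isMinimalCut_Reg hq1 hq2 a b x y wC hC hwC hhC
  rcases lt_or_ge hC ((q2 : ℤ) ^ b) with hhb | hhb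
  · obtain ⟨b, rfl⟩ := Nat.exists_eq_add_one_of_ne_zero
      (show b ≠ 0 by rintro rfl; rw [pow_zero] at hhb; omega)
    simpa only [IsMinimalCut, GoodCut.pow_succ_snd_iff (Nat.zero_lt_of_lt hq1) hq2 hhb] using
      subsingleton_isMinimalCut_Reg hq1 hq2 a b x y wC hC hwC hhC
  obtain ⟨rfl, hx⟩ := Int.eq_and_dvd_of_not_exists_dvd hw hwa hxm
  obtain ⟨rfl, hy⟩ := Int.eq_and_dvd_of_not_exists_dvd hh hhb hym
  intro S hS S' hS'
  rw [hS.eq_singleton (GoodCut.singleton_Reg hx hy) (Reg_nonempty hw hh),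
    hS'.eq_singleton (GoodCut.singleton_Reg hx hy) (Reg_nonempty hw hh)]
termination_by a + b + wC.toNat + hC.toNat

/-- for any container `C = [xC, xC+wC) × [yC, yC+hC)` and any regular
size `[w,h]`, a smallest (in cardinality) set of pairwise non-overlapping regular
aligned containers of size `⪯ [w,h]` whose union is `C` is unique if it exists:
the cutting function `σ(C,[w,h])` is well-defined. -/
theorem stmt9 (q1 q2 : ℕ) (hq1 : 1 < q1) (hq2 : 1 < q2)
    (a b : ℕ) (w h : ℤ) (hw : w = (q1 : ℤ) ^ a) (hh : h = (q2 : ℤ) ^ b)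
    (xC yC wC hC : ℤ) (hwC : 0 < wC) (hhC : 0 < hC)
    (S1 S2 : Set (Set (ℤ × ℤ)))
    (h1 : GoodCut q1 q2 w h (Reg xC yC wC hC) S1)
    (h2 : GoodCut q1 q2 w h (Reg xC yC wC hC) S2)
    (hmin1 : ∀ T, GoodCut q1 q2 w h (Reg xC yC wC hC) T → S1.ncard ≤ T.ncard)
    (hmin2 : ∀ T, GoodCut q1 q2 w h (Reg xC yC wC hC) T → S2.ncard ≤ T.ncard) :
    S1 = S2 := by
  subst hw hh
  exact subsingleton_isMinimalCut_Reg hq1 hq2 a b xC yC wC hC hwC hhC ⟨h1, hmin1⟩ ⟨h2, hmin2⟩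
end
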